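/- arXiv:math/0608409 — 4 statements merged into one kernel-verified Lean document; each statement's English description precedes it below -/
import Mathlib

section
/- Let R be a multivariable skew Laurent polynomial ring of rank m over a division ring K. Then there exists a choice of elements t^α ∈ V_α \ {0} for all α ∈ ℤ^m such that t^{nα} = (t^α)^n for all α ∈ ℤ^m and all n ∈ ℕ, and t^{−α} is the inverse of the unit t^α for all α (in particular t^0 = 1). Moreover, for any such choice one has t^α · t^β · (t^{α+β})^{−1} ∈ K \ {0} and t^α · K = K · t^α for all α, β ∈ ℤ^m. -/
/-- A multivariable skew Laurent polynomial ring of rank `m` over a division ring `K`: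
a ring `R` together with an inclusion of `K` and additive subgroups (`ℤ`-submodules)
`V α ⊆ R` for `α ∈ ℤ^m` such that `R` is the internal direct sum of the `V α`,
`V α * V β = V (α + β)`, `V 0 = K`, and each `V α` is a one-dimensional left
`K`-vector space. -/
structure SkewLaurentRing (K : Type) [DivisionRing K] (m : ℕ) (R : Type) [Ring R] where
  /-- the inclusion of `K` into `R` as the degree-zero part -/
  incl : K →+* R
  /-- the graded components -/
  V : (Fin m → ℤ) → Submodule ℤ R
  /-- `R` is the internal direct sum `⊕_{α ∈ ℤ^m} V α` -/
  isInternal : DirectSum.IsInternal V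
  /-- `V α · V β = V (α + β)` (product of additive subgroups) -/
  mul_V : ∀ α β : Fin m → ℤ, V α * V β = V (α + β)
  /-- `V 0 = K` -/
  V_zero : ∀ x : R, x ∈ V 0 ↔ ∃ k : K, x = incl k
  /-- each `V α` is a one-dimensional left `K`-vector space: `V α = K · t` for some `t ≠ 0` -/
  oneDim : ∀ α : Fin m → ℤ, ∃ t ∈ V α, t ≠ 0 ∧ ∀ x ∈ V α, ∃ k : K, x = incl k * t

/-- `c` is the graded decomposition of `f`: a finitely supported family with
`c α ∈ V α` and `f = ∑_α c α`. -/
def IsDecomp {K : Type} [DivisionRing K] {m : ℕ} {R : Type} [Ring R]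
    (L : SkewLaurentRing K m R) (f : R) (c : (Fin m → ℤ) →₀ R) : Prop :=
  (∀ α, c α ∈ L.V α) ∧ f = c.sum fun _ x => x

/-- For a finite support set `S ⊆ ℤ^m` and a homomorphism `φ : ℤ^m → ℝ`,
`suppNorm φ S = max {φ α - φ β : α, β ∈ S}` (and `0` if `S = ∅`). -/
noncomputable def suppNorm {m : ℕ} (φ : (Fin m → ℤ) →+ ℝ) (S : Finset (Fin m → ℤ)) : ℝ :=
  WithBot.unbotD 0 ((S.image ⇑φ).max) - WithTop.untopD 0 ((S.image ⇑φ).min)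

section Aux

variable {K : Type} [DivisionRing K] {m : ℕ} {R : Type} [Ring R] (L : SkewLaurentRing K m R)

lemma aux_mul_mem {a b : R} {α β : Fin m → ℤ} (ha : a ∈ L.V α) (hb : b ∈ L.V β) :
    a * b ∈ L.V (α + β) := by
  rw [← L.mul_V]; exact Submodule.mul_mem_mul ha hb

lemma aux_incl_mem (k : K) : L.incl k ∈ L.V 0 := (L.V_zero _).mpr ⟨k, rfl⟩

lemma aux_one_mem : (1 : R) ∈ L.V 0 := (L.V_zero 1).mpr ⟨1, (map_one L.incl).symm⟩

include L in
lemma aux_nontrivial : Nontrivial R := by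
  obtain ⟨t, _, ht, _⟩ := L.oneDim 0
  exact nontrivial_of_ne t 0 ht

lemma aux_pow_mem {x : R} {α : Fin m → ℤ} (hx : x ∈ L.V α) (n : ℕ) :
    x ^ n ∈ L.V (n • α) := by
  induction n with
  | zero => rw [pow_zero, zero_smul]; exact aux_one_mem L
  | succ n ih => rw [pow_succ, succ_nsmul]; exact aux_mul_mem L ih hx

lemma aux_factor {x p : R} {α : Fin m → ℤ} (hx : x ∈ L.V α) (hxne : x ≠ 0)
    (hp : p ∈ L.V α) : ∃ k : K, p = L.incl k * x := by
  obtain ⟨tα, htV, htne, hspan⟩ := L.oneDim α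
  obtain ⟨kx, hkx⟩ := hspan x hx
  have kx0 : kx ≠ 0 := by
    rintro rfl
    rw [map_zero, zero_mul] at hkx
    exact hxne hkx
  obtain ⟨kp, hkp⟩ := hspan p hp
  refine ⟨kp * kx⁻¹, ?_⟩
  rw [hkp, hkx, map_mul, mul_assoc, ← mul_assoc (L.incl kx⁻¹), ← map_mul,
    inv_mul_cancel₀ kx0, map_one, one_mul]

lemma aux_inv {x : R} {α : Fin m → ℤ} (hx : x ∈ L.V α) (hxne : x ≠ 0) :
    ∃ y ∈ L.V (-α), x * y = 1 ∧ y * x = 1 := by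
  haveI : Nontrivial R := aux_nontrivial L
  -- right inverse
  have hq : ∃ q ∈ L.V (-α), x * q ≠ 0 := by
    by_contra h
    push_neg at h
    have hle : L.V α * L.V (-α) ≤ ⊥ := Submodule.mul_le.mpr (by
      intro p hp q hq
      obtain ⟨k, hk⟩ := aux_factor L hx hxne hp
      have : p * q = 0 := by rw [hk, mul_assoc, h q hq, mul_zero]
      simp [this])
    rw [L.mul_V] at hle
    have h1 : (1 : R) ∈ L.V (α + -α) := by
      rw [add_neg_cancel]; exact aux_one_mem L
    have := hle h1
    simp only [Submodule.mem_bot] at this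
    exact one_ne_zero this
  obtain ⟨q, hqV, hqx⟩ := hq
  have hxq0 : x * q ∈ L.V 0 := by
    have := aux_mul_mem L hx hqV
    rwa [add_neg_cancel] at this
  obtain ⟨c, hc⟩ := (L.V_zero _).mp hxq0
  have hc0 : c ≠ 0 := by rintro rfl; rw [map_zero] at hc; exact hqx hc
  set y₁ : R := q * L.incl c⁻¹ with hy₁
  have hy₁V : y₁ ∈ L.V (-α) := by
    have := aux_mul_mem L hqV (aux_incl_mem L c⁻¹)
    rwa [add_zero] at this
  have hxy₁ : x * y₁ = 1 := by
    rw [hy₁, ← mul_assoc, hc, ← map_mul, mul_inv_cancel₀ hc0, map_one]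
  -- left inverse
  have hq' : ∃ q' ∈ L.V (-α), q' * x ≠ 0 := by
    by_contra h
    push_neg at h
    have hle : L.V (-α) * L.V α ≤ ⊥ := Submodule.mul_le.mpr (by
      intro q' hq' p hp
      obtain ⟨k, hk⟩ := aux_factor L hx hxne hp
      have hmem : q' * L.incl k ∈ L.V (-α) := by
        have := aux_mul_mem L hq' (aux_incl_mem L k)
        rwa [add_zero] at this
      have : q' * p = 0 := by rw [hk, ← mul_assoc, h _ hmem]
      simp [this])
    rw [L.mul_V] at hle
    have h1 : (1 : R) ∈ L.V (-α + α) := by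
      rw [neg_add_cancel]; exact aux_one_mem L
    have := hle h1
    simp only [Submodule.mem_bot] at this
    exact one_ne_zero this
  obtain ⟨q', hq'V, hq'x⟩ := hq'
  have hq'x0 : q' * x ∈ L.V 0 := by
    have := aux_mul_mem L hq'V hx
    rwa [neg_add_cancel] at this
  obtain ⟨c', hc'⟩ := (L.V_zero _).mp hq'x0
  have hc'0 : c' ≠ 0 := by rintro rfl; rw [map_zero] at hc'; exact hq'x hc'
  set y₂ : R := L.incl c'⁻¹ * q' with hy₂
  have hy₂x : y₂ * x = 1 := by
    rw [hy₂, mul_assoc, hc', ← map_mul, inv_mul_cancel₀ hc'0, map_one]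
  have hyy : y₂ = y₁ := by
    calc y₂ = y₂ * (x * y₁) := by rw [hxy₁, mul_one]
    _ = (y₂ * x) * y₁ := (mul_assoc _ _ _).symm
    _ = y₁ := by rw [hy₂x, one_mul]
  exact ⟨y₁, hy₁V, hxy₁, by rw [← hyy]; exact hy₂x⟩

end Aux

/-- There is a choice of nonzero `t^α ∈ V α` with `t^{nα} = (t^α)^n` for `n ∈ ℕ`
and `t^{-α}` a two-sided inverse of `t^α` (so in particular `t^0 = 1`); moreover,
for any such choice, `t^α · t^β · (t^{α+β})⁻¹` is a nonzero element of `K` and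
`t^α · K = K · t^α` for all `α, β ∈ ℤ^m`. -/
theorem exists_compatible_units (K : Type) [DivisionRing K] (m : ℕ) (hm : 0 < m)
    (R : Type) [Ring R] (L : SkewLaurentRing K m R) :
    (∃ t : (Fin m → ℤ) → R,
        (∀ α, t α ∈ L.V α ∧ t α ≠ 0) ∧ t 0 = 1 ∧
        (∀ (α : Fin m → ℤ) (n : ℕ), t (n • α) = (t α) ^ n) ∧
        (∀ α, t α * t (-α) = 1 ∧ t (-α) * t α = 1)) ∧
    (∀ t : (Fin m → ℤ) → R,
        ((∀ α, t α ∈ L.V α ∧ t α ≠ 0) ∧ t 0 = 1 ∧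
          (∀ (α : Fin m → ℤ) (n : ℕ), t (n • α) = (t α) ^ n) ∧
          (∀ α, t α * t (-α) = 1 ∧ t (-α) * t α = 1)) →
        (∀ α β : Fin m → ℤ, ∃ k : K, k ≠ 0 ∧ t α * t β * t (-(α + β)) = L.incl k) ∧
        (∀ α : Fin m → ℤ,
          (Set.range fun k : K => t α * L.incl k) =
            Set.range fun k : K => L.incl k * t α)) := by
  haveI : Nontrivial R := aux_nontrivial L
  constructor
  · -- existence of a compatible system of units
    -- choose a unit in each V α
    have hU : ∀ α : Fin m → ℤ, ∃ u : Rˣ, (u : R) ∈ L.V α ∧ ((u⁻¹ : Rˣ) : R) ∈ L.V (-α) := by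
      intro α
      obtain ⟨s, hsV, hsne, -⟩ := L.oneDim α
      obtain ⟨y, hyV, hxy, hyx⟩ := aux_inv L hsV hsne
      exact ⟨⟨s, y, hxy, hyx⟩, hsV, hyV⟩
    choose U hU1 hU2 using hU
    -- the index of the first nonzero coordinate
    set idx : (Fin m → ℤ) → Fin m :=
      fun β => WithTop.untopD ⟨0, hm⟩ ((Finset.univ.filter fun i => β i ≠ 0).min) with hidx
    have hidxneg : ∀ β : Fin m → ℤ, idx (-β) = idx β := by
      intro β
      have hfil : (Finset.univ.filter fun i => (-β) i ≠ 0)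
          = (Finset.univ.filter fun i => β i ≠ 0) :=
        Finset.filter_congr (fun i _ => by simp)
      simp only [hidx, hfil]
    have hidxne : ∀ β : Fin m → ℤ, β ≠ 0 → β (idx β) ≠ 0 := by
      intro β hβ
      have hne : (Finset.univ.filter fun i => β i ≠ 0).Nonempty := by
        by_contra h
        rw [Finset.not_nonempty_iff_eq_empty] at h
        apply hβ
        funext i
        show β i = 0
        by_contra hi
        have : i ∈ (Finset.univ.filter fun i => β i ≠ 0) := by
          simp [hi]
        rw [h] at this
        exact absurd this (Finset.notMem_empty i)
      have hmem : idx β ∈ (Finset.univ.filter fun i => β i ≠ 0) := by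
        simp only [hidx]
        rw [← Finset.coe_min' hne, WithTop.untopD_coe]
        exact Finset.min'_mem _ hne
      exact (Finset.mem_filter.mp hmem).2
    -- sign-corrected units
    set w : (Fin m → ℤ) → Rˣ :=
      fun β => if 0 < β (idx β) then U β else (U (-β))⁻¹ with hw
    have hwV : ∀ β, (w β : R) ∈ L.V β := by
      intro β
      by_cases h : 0 < β (idx β)
      · simp only [hw, if_pos h]; exact hU1 β
      · simp only [hw, if_neg h]
        have := hU2 (-β)
        rwa [neg_neg] at this
    have hwneg : ∀ β : Fin m → ℤ, β ≠ 0 → w (-β) = (w β)⁻¹ := by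
      intro β hβ
      have h1 : (-β) (idx (-β)) = - (β (idx β)) := by rw [hidxneg]; simp
      have h2 := hidxne β hβ
      by_cases h : 0 < β (idx β)
      · have h3 : ¬ 0 < (-β) (idx (-β)) := by rw [h1]; omega
        simp only [hw, if_pos h, if_neg h3, neg_neg]
      · have h3 : 0 < (-β) (idx (-β)) := by rw [h1]; omega
        simp only [hw, if_pos h3, if_neg h, neg_neg, inv_inv]
    -- gcd and primitive part
    set g : (Fin m → ℤ) → ℕ := fun α => Finset.univ.gcd fun i => (α i).natAbs with hg
    have hgdvd : ∀ (α : Fin m → ℤ) (i : Fin m), (g α : ℤ) ∣ α i := fun α i =>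
      Int.dvd_natAbs.mp (Int.natCast_dvd_natCast.mpr (Finset.gcd_dvd (Finset.mem_univ i)))
    set prim : (Fin m → ℤ) → (Fin m → ℤ) := fun α i => α i / (g α : ℤ) with hprim
    have hsmul : ∀ α : Fin m → ℤ, (g α) • prim α = α := by
      intro α
      funext i
      show (g α : ℕ) • (α i / (g α : ℤ)) = α i
      rw [nsmul_eq_mul, Int.mul_ediv_cancel' (hgdvd α i)]
    have hprimne : ∀ α : Fin m → ℤ, α ≠ 0 → prim α ≠ 0 := by
      intro α hα h
      apply hα
      rw [← hsmul α, h, smul_zero]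
    have hgneg : ∀ α : Fin m → ℤ, g (-α) = g α := by
      intro α
      simp only [hg]
      apply Finset.gcd_congr rfl
      intro i _
      simp
    have hprimneg : ∀ α : Fin m → ℤ, prim (-α) = - prim α := by
      intro α
      funext i
      show (-α) i / (g (-α) : ℤ) = -(α i / (g α : ℤ))
      rw [hgneg]
      obtain ⟨c, hc⟩ := hgdvd α i
      by_cases hgz : (g α : ℤ) = 0
      · simp [hc, hgz]
      · simp only [Pi.neg_apply, hc]
        rw [show -((g α : ℤ) * c) = (g α : ℤ) * (-c) by ring,
          Int.mul_ediv_cancel_left _ hgz, Int.mul_ediv_cancel_left _ hgz]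
    have hgsm : ∀ (n : ℕ) (α : Fin m → ℤ), g (n • α) = n * g α := by
      intro n α
      simp only [hg]
      have heq : ∀ i ∈ Finset.univ, ((n • α) i).natAbs = n * (α i).natAbs := by
        intro i _
        simp [Pi.smul_apply, Int.natAbs_mul]
      rw [Finset.gcd_congr rfl heq, Finset.gcd_mul_left, normalize_eq]
    have hprimsm : ∀ (n : ℕ) (α : Fin m → ℤ), 0 < n → prim (n • α) = prim α := by
      intro n α hn
      funext i
      show (n • α) i / (g (n • α) : ℤ) = α i / (g α : ℤ)
      rw [hgsm]
      have h1 : (n • α) i = (n : ℤ) * α i := by simp [Pi.smul_apply]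
      have h2 : ((n * g α : ℕ) : ℤ) = (n : ℤ) * (g α : ℤ) := by push_cast; ring
      rw [h1, h2, Int.mul_ediv_mul_of_pos _ _ (by exact_mod_cast hn)]
    have hsmne : ∀ (n : ℕ) (α : Fin m → ℤ), 0 < n → α ≠ 0 → n • α ≠ 0 := by
      intro n α hn hα h
      apply hα
      funext i
      have := congrFun h i
      simp only [Pi.smul_apply, Pi.zero_apply, smul_eq_zero] at this
      rcases this with h' | h'
      · omega
      · exact h'
    -- the compatible system
    set T : (Fin m → ℤ) → Rˣ :=
      fun α => if α = 0 then 1 else (w (prim α)) ^ (g α) with hT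
    refine ⟨fun α => (T α : R), ?_, ?_, ?_, ?_⟩
    · intro α
      refine ⟨?_, Units.ne_zero _⟩
      by_cases h : α = 0
      · subst h
        simp only [hT, if_pos rfl, Units.val_one]
        exact aux_one_mem L
      · simp only [hT, if_neg h, Units.val_pow_eq_pow_val]
        have := aux_pow_mem L (hwV (prim α)) (g α)
        rwa [hsmul α] at this
    · simp [hT]
    · intro α n
      by_cases hα : α = 0
      · subst hα
        rw [smul_zero]
        simp [hT]
      · by_cases hn : n = 0
        · subst hn
          rw [zero_smul]
          simp [hT]
        · have hn' : 0 < n := Nat.pos_of_ne_zero hn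
          have h1 : n • α ≠ 0 := hsmne n α hn' hα
          simp only [hT, if_neg h1, if_neg hα]
          rw [hprimsm n α hn', hgsm n α, mul_comm, pow_mul, Units.val_pow_eq_pow_val]
    · intro α
      have hTneg : T (-α) = (T α)⁻¹ := by
        by_cases h : α = 0
        · subst h; simp [hT]
        · have h' : -α ≠ 0 := neg_ne_zero.mpr h
          simp only [hT, if_neg h, if_neg h']
          rw [hgneg, hprimneg α, hwneg (prim α) (hprimne α h), inv_pow]
      show ((T α : R) * (T (-α) : R) = 1) ∧ ((T (-α) : R) * (T α : R) = 1)
      rw [hTneg]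
      exact ⟨by rw [← Units.val_mul, mul_inv_cancel, Units.val_one],
        by rw [← Units.val_mul, inv_mul_cancel, Units.val_one]⟩
  · -- properties of any compatible system
    rintro t ⟨hmem, h0, hpow, hinv⟩
    constructor
    · intro α β
      have hx : t α * t β * t (-(α + β)) ∈ L.V 0 := by
        have h1 := aux_mul_mem L (aux_mul_mem L (hmem α).1 (hmem β).1) (hmem (-(α + β))).1
        rwa [add_neg_cancel] at h1
      obtain ⟨k, hk⟩ := (L.V_zero _).mp hx
      refine ⟨k, ?_, hk⟩
      intro hk0
      have hone : (t α * t β * t (-(α + β))) * (t (α + β) * (t (-β) * t (-α))) = 1 := by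
        have e1 : t (-(α + β)) * (t (α + β) * (t (-β) * t (-α))) = t (-β) * t (-α) := by
          rw [← mul_assoc, (hinv (α + β)).2, one_mul]
        rw [mul_assoc (t α * t β), e1, mul_assoc, ← mul_assoc (t β), (hinv β).1,
          one_mul, (hinv α).1]
      rw [hk0, map_zero] at hk
      rw [hk, zero_mul] at hone
      exact zero_ne_one hone
    · intro α
      ext x
      simp only [Set.mem_range]
      constructor
      · rintro ⟨k, rfl⟩
        have hy : t α * L.incl k * t (-α) ∈ L.V 0 := by
          have h1 := aux_mul_mem L (aux_mul_mem L (hmem α).1 (aux_incl_mem L k)) (hmem (-α)).1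
          rwa [add_zero, add_neg_cancel] at h1
        obtain ⟨k', hk'⟩ := (L.V_zero _).mp hy
        refine ⟨k', ?_⟩
        rw [← hk', mul_assoc, mul_assoc, (hinv α).2, mul_one]
      · rintro ⟨k, rfl⟩
        have hy : t (-α) * L.incl k * t α ∈ L.V 0 := by
          have h1 := aux_mul_mem L (aux_mul_mem L (hmem (-α)).1 (aux_incl_mem L k)) (hmem α).1
          rwa [add_zero, neg_add_cancel] at h1
        obtain ⟨k', hk'⟩ := (L.V_zero _).mp hy
        refine ⟨k', ?_⟩
        rw [← hk', ← mul_assoc, ← mul_assoc, (hinv α).1, one_mul]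
end

section
/- Let R be a multivariable skew Laurent polynomial ring of rank m over a division ring K. Then R satisfies the right Ore condition with respect to its nonzero elements: for all nonzero f, g ∈ R there exist nonzero u, v ∈ R such that f·u = g·v. Similarly R satisfies the left Ore condition: for all nonzero f, g ∈ R there exist nonzero u, v ∈ R such that u·f = v·g. -/
/-- Uniqueness of graded decompositions. -/
theorem decompUnique {ι : Type*} [DecidableEq ι] {M : Type*} [AddCommGroup M]
    (V : ι → Submodule ℤ M) (hInt : DirectSum.IsInternal V)
    (S : Finset ι) (c : ι → M) (hc : ∀ γ, c γ ∈ V γ)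
    (h0 : ∑ γ ∈ S, c γ = 0) : ∀ γ ∈ S, c γ = 0 := by
  classical
  set x : DirectSum ι fun i => V i := ∑ γ ∈ S, DirectSum.of (fun i => V i) γ ⟨c γ, hc γ⟩ with hx
  have hcoe : DirectSum.coeLinearMap V x = 0 := by
    rw [hx, map_sum]
    simpa using h0
  have hx0 : x = 0 := by
    apply hInt.injective
    rw [map_zero]; exact hcoe
  intro γ hγ
  have happ : x γ = ⟨c γ, hc γ⟩ := by
    rw [hx, DFinsupp.finset_sum_apply]
    have hone : ∑ a ∈ S, ((DirectSum.of (fun i => ↥(V i)) a) ⟨c a, hc a⟩) γ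
        = ((DirectSum.of (fun i => ↥(V i)) γ) ⟨c γ, hc γ⟩) γ :=
      Finset.sum_eq_single_of_mem γ hγ (fun b _ hb => DirectSum.of_eq_of_ne _ _ _ hb.symm)
    rw [hone, DirectSum.of_eq_same]
  have := happ.symm.trans (by rw [hx0])
  exact Subtype.ext_iff.mp this

/-- Existence of graded decompositions. -/
theorem decompExists {ι : Type*} [DecidableEq ι] {M : Type*} [AddCommGroup M]
    (V : ι → Submodule ℤ M) (hInt : DirectSum.IsInternal V) (f : M) :
    ∃ (S : Finset ι) (c : ι → M), (∀ γ, c γ ∈ V γ) ∧ (∀ γ ∉ S, c γ = 0) ∧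
      f = ∑ γ ∈ S, c γ := by
  classical
  obtain ⟨x, hx⟩ := hInt.surjective f
  refine ⟨DFinsupp.support x, fun γ => (x γ : M), fun γ => (x γ).2, ?_, ?_⟩
  · intro γ hγ
    simp [DFinsupp.notMem_support_iff.mp hγ]
  · rw [← hx]
    conv_lhs => rw [← DirectSum.sum_support_of x]
    rw [map_sum]
    simp

theorem natIneq (k : ℕ) : ∀ s : ℕ, k ≤ s → (s + 1) ^ k * (s - k) ≤ s ^ (k + 1) := by
  induction k with
  | zero => intro s _; simpa using Nat.sub_le s 0
  | succ k ih =>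
    intro s hs
    have ha : s - k = (s - (k+1)) + 1 := by omega
    have h1 : (s + 1) * (s - (k+1)) ≤ s * (s - k) := by
      calc (s+1)*(s-(k+1)) = s*(s-(k+1)) + (s-(k+1)) := by ring
        _ ≤ s*(s-(k+1)) + s := by omega
        _ = s*((s-(k+1))+1) := by ring
        _ = s*(s-k) := by rw [← ha]
    calc (s+1)^(k+1) * (s - (k+1)) = (s+1)^k * ((s+1) * (s - (k+1))) := by ring
      _ ≤ (s+1)^k * (s * (s-k)) := Nat.mul_le_mul_left _ h1
      _ = ((s+1)^k * (s-k)) * s := by ring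
      _ ≤ s^(k+1) * s := Nat.mul_le_mul_right _ (ih s (by omega))
      _ = s^(k+2) := by ring

theorem natIneq2 {m : ℕ} (hm : 0 < m) (N : ℕ) :
    (2*m*(2*N+1) + 2*N) ^ m < 2 * (2*m*(2*N+1)) ^ m := by
  have h1 : 2*m*(2*N+1) + 2*N = (2*m+1)*(2*N+1) - 1 := by ring_nf; omega
  have h2 : ((2*m+1)*(2*N+1) - 1) ^ m < ((2*m+1)*(2*N+1)) ^ m := by
    apply Nat.pow_lt_pow_left _ (by omega)
    have : 1 ≤ (2*m+1)*(2*N+1) := Nat.one_le_iff_ne_zero.mpr (by positivity)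
    omega
  have h3 : (2*m+1) ^ m ≤ 2 * (2*m) ^ m := by
    have hk := natIneq m (2*m) (by omega)
    have hmm : 2*m - m = m := by omega
    rw [hmm] at hk
    have h5 : (2*m+1)^m * m ≤ (2 * (2*m)^m) * m := by
      calc (2*m+1)^m * m ≤ (2*m)^(m+1) := hk
        _ = (2 * (2*m)^m) * m := by ring
    exact Nat.le_of_mul_le_mul_right h5 hm
  calc (2*m*(2*N+1) + 2*N) ^ m = ((2*m+1)*(2*N+1) - 1) ^ m := by rw [h1]
    _ < ((2*m+1)*(2*N+1)) ^ m := h2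
    _ = (2*m+1)^m * (2*N+1)^m := by rw [Nat.mul_pow]
    _ ≤ (2 * (2*m)^m) * (2*N+1)^m := Nat.mul_le_mul_right _ h3
    _ = 2 * ((2*m)^m * (2*N+1)^m) := by ring
    _ = 2 * (2*m*(2*N+1))^m := by rw [← Nat.mul_pow]


theorem intAbsBound {a : ℤ} {N : ℕ} (h : a.natAbs ≤ N) : -(N:ℤ) ≤ a ∧ a ≤ N := by omega

theorem toNatEq1 (s : ℕ) : ((s:ℤ) - 1 + 1 - 0).toNat = s := by omega

theorem toNatEq2 (s N : ℕ) : ((s:ℤ) - 1 + (N:ℤ) + 1 - (-(N:ℤ))).toNat = s + 2*N := by omega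

theorem addBound {a b : ℤ} {N s : ℕ} (h1 : -(N:ℤ) ≤ a) (h2 : a ≤ N) (h3 : (0:ℤ) ≤ b)
    (h4 : b ≤ (s:ℤ) - 1) : -(N:ℤ) ≤ a + b ∧ a + b ≤ (s:ℤ) - 1 + N := by
  constructor <;> omega

set_option maxHeartbeats 1000000 in
theorem oreAux {m : ℕ} (hm : 0 < m) {R : Type} [Ring R] {K₀ : Type} [DivisionRing K₀]
    [Module K₀ R] (V : (Fin m → ℤ) → Submodule ℤ R) (hInt : DirectSum.IsInternal V)
    (t : (Fin m → ℤ) → R) (ht : ∀ α, t α ∈ V α) (ht0 : ∀ α, t α ≠ 0)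
    (hrep : ∀ α, ∀ x ∈ V α, ∃ k : K₀, x = k • t α)
    (hsmem : ∀ (k : K₀) (α : Fin m → ℤ) (x : R), x ∈ V α → k • x ∈ V α)
    (μ : R → R → R)
    (hadd1 : ∀ x y u : R, μ (x + y) u = μ x u + μ y u)
    (hadd2 : ∀ f u v : R, μ f (u + v) = μ f u + μ f v)
    (hsmul2 : ∀ (f : R) (k : K₀) (u : R), μ f (k • u) = k • μ f u)
    (hhom : ∀ (α β : Fin m → ℤ) (x y : R), x ∈ V α → y ∈ V β → μ x y ∈ V (α + β))
    (hnz : ∀ (α β : Fin m → ℤ) (x y : R), x ∈ V α → y ∈ V β → x ≠ 0 → y ≠ 0 → μ x y ≠ 0) :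
    ∀ f g : R, f ≠ 0 → g ≠ 0 → ∃ u v : R, u ≠ 0 ∧ v ≠ 0 ∧ μ f u = μ g v := by
  classical
  -- basic consequences of biadditivity
  have hμ01 : ∀ u : R, μ 0 u = 0 := by
    intro u
    have h := hadd1 0 0 u
    rw [add_zero] at h
    exact (left_eq_add.mp h)
  have hμ02 : ∀ f : R, μ f 0 = 0 := by
    intro f
    have h := hadd2 f 0 0
    rw [add_zero] at h
    exact (left_eq_add.mp h)
  have hsum1 : ∀ {γ : Type} (s : Finset γ) (F : γ → R) (u : R),
      μ (∑ a ∈ s, F a) u = ∑ a ∈ s, μ (F a) u := by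
    intro γ s F u
    induction s using Finset.cons_induction with
    | empty => simpa using hμ01 u
    | cons a s ha ih => rw [Finset.sum_cons, hadd1, ih, Finset.sum_cons]
  -- the key "no zero divisors" property, via leading terms in the lex order
  have hμnz : ∀ f u : R, f ≠ 0 → u ≠ 0 → μ f u ≠ 0 := by
    intro f u hf hu hfu
    obtain ⟨Sf, c, hc, hcS, hfsum⟩ := decompExists V hInt f
    obtain ⟨Su, d, hd, hdS, husum⟩ := decompExists V hInt u
    set A : Finset (Fin m → ℤ) := Sf.filter (fun α => c α ≠ 0) with hA
    set B : Finset (Fin m → ℤ) := Su.filter (fun α => d α ≠ 0) with hB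
    have hfA : f = ∑ α ∈ A, c α := by
      rw [hfsum]
      exact (Finset.sum_filter_ne_zero _).symm
    have huB : u = ∑ β ∈ B, d β := by
      rw [husum]
      exact (Finset.sum_filter_ne_zero _).symm
    have hAne : A.Nonempty := by
      rcases Finset.eq_empty_or_nonempty A with h | h
      · exact absurd (by rw [hfA, h, Finset.sum_empty]) hf
      · exact h
    have hBne : B.Nonempty := by
      rcases Finset.eq_empty_or_nonempty B with h | h
      · exact absurd (by rw [huB, h, Finset.sum_empty]) hu
      · exact h
    obtain ⟨as, haA, hamax⟩ := A.exists_max_image (fun a => (toLex a : Lex (Fin m → ℤ))) hAne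
    obtain ⟨bs, hbB, hbmax⟩ := B.exists_max_image (fun a => (toLex a : Lex (Fin m → ℤ))) hBne
    -- regroup μ f u as a sum of graded components
    have hexp : μ f u = ∑ p ∈ A ×ˢ B, μ (c p.1) (d p.2) := by
      rw [hfA, hsum1, Finset.sum_product]
      congr 1
      funext α
      rw [huB]
      induction B using Finset.cons_induction with
      | empty => simpa using hμ02 (c α)
      | cons b s hb ih => rw [Finset.sum_cons, hadd2, ih, Finset.sum_cons]
    set T : Finset (Fin m → ℤ) := (A ×ˢ B).image (fun p => p.1 + p.2) with hT
    set e : (Fin m → ℤ) → R :=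
      fun γ => ∑ p ∈ (A ×ˢ B).filter (fun p => p.1 + p.2 = γ), μ (c p.1) (d p.2) with he
    have heV : ∀ γ, e γ ∈ V γ := by
      intro γ
      apply Submodule.sum_mem
      rintro ⟨α, β⟩ hp
      obtain ⟨hpAB, hpγ⟩ := Finset.mem_filter.mp hp
      have := hhom α β (c α) (d β) (hc α) (hd β)
      rwa [hpγ] at this
    have hesum : ∑ γ ∈ T, e γ = 0 := by
      rw [he, hT, Finset.sum_fiberwise_of_maps_to (fun p hp => Finset.mem_image_of_mem _ hp)]
      rw [← hexp]
      exact hfu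
    have hmemT : as + bs ∈ T :=
      Finset.mem_image_of_mem (fun p => p.1 + p.2)
        (Finset.mem_product.mpr ⟨haA, hbB⟩ : (as, bs) ∈ A ×ˢ B)
    have he0 := decompUnique V hInt T e heV hesum (as + bs) hmemT
    -- the fiber over as + bs is the single pair (as, bs)
    have hfiber : e (as + bs) = μ (c as) (d bs) := by
      rw [he]
      apply Finset.sum_eq_single_of_mem (as, bs)
      · exact Finset.mem_filter.mpr ⟨Finset.mem_product.mpr ⟨haA, hbB⟩, rfl⟩
      · rintro ⟨α, β⟩ hp hne
        exfalso
        obtain ⟨hpAB, hpγ⟩ := Finset.mem_filter.mp hp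
        obtain ⟨hαA, hβB⟩ := Finset.mem_product.mp hpAB
        have h1 : toLex α ≤ toLex as := hamax α hαA
        have h2 : toLex β ≤ toLex bs := hbmax β hβB
        have hlex : (toLex α + toLex β : Lex (Fin m → ℤ)) = toLex as + toLex bs := by
          exact congrArg toLex hpγ
        have hαas : α = as := by
          by_contra hne'
          have : toLex α < toLex as := lt_of_le_of_ne h1 (fun h => hne' (toLex.injective h))
          exact absurd hlex (ne_of_lt (add_lt_add_of_lt_of_le this h2))
        have hβbs : β = bs := by
          subst hαas
          have := add_left_cancel hpγ
          exact this
        exact hne (by rw [hαas, hβbs])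
    have hcas : c as ≠ 0 := (Finset.mem_filter.mp haA).2
    have hdbs : d bs ≠ 0 := (Finset.mem_filter.mp hbB).2
    exact hnz as bs (c as) (d bs) (hc as) (hd bs) hcas hdbs (hfiber ▸ he0)
    -- ====== the counting argument ======
  intro f g hf hg
  obtain ⟨Sf, c, hc, hcS, hfsum⟩ := decompExists V hInt f
  obtain ⟨Sg, d, hd, hdS, hgsum⟩ := decompExists V hInt g
  set N : ℕ := (Sf ∪ Sg).sup (fun α => Finset.univ.sup (fun i => (α i).natAbs)) with hN
  have hbound : ∀ α ∈ Sf ∪ Sg, ∀ i, -(N:ℤ) ≤ α i ∧ α i ≤ N := by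
    intro α hα i
    have h1 : (α i).natAbs ≤ N := by
      rw [hN]
      exact le_trans (Finset.le_sup (f := fun i => (α i).natAbs) (Finset.mem_univ i))
        (Finset.le_sup (f := fun α => Finset.univ.sup (fun i => (α i).natAbs)) hα)
    exact intAbsBound h1
  clear_value N
  obtain ⟨s, hs⟩ : ∃ s : ℕ, s = 2*m*(2*N+1) := ⟨_, rfl⟩
  have hs0 : 0 < s := by
    rw [hs]
    exact Nat.mul_pos (Nat.mul_pos (by norm_num) hm) (Nat.succ_pos _)
  set box1 : Finset (Fin m → ℤ) := Finset.Icc (fun _ => (0:ℤ)) (fun _ => (s:ℤ) - 1) with hbox1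
  set box2 : Finset (Fin m → ℤ) := Finset.Icc (fun _ => -(N:ℤ)) (fun _ => (s:ℤ) - 1 + N)
    with hbox2
  have hcard1 : box1.card = s ^ m := by
    rw [hbox1, Pi.card_Icc]
    simp only [Int.card_Icc]
    have hstep : ∀ i ∈ Finset.univ (α := Fin m),
        ((fun _ => (s:ℤ) - 1) i + 1 - (fun _ => (0:ℤ)) i).toNat = s := by
      intro i _
      exact toNatEq1 s
    rw [Finset.prod_congr rfl hstep, Finset.prod_const, Finset.card_univ, Fintype.card_fin]
  have hcard2 : box2.card = (s + 2*N) ^ m := by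
    rw [hbox2, Pi.card_Icc]
    simp only [Int.card_Icc]
    have hstep : ∀ i ∈ Finset.univ (α := Fin m),
        ((fun _ => (s:ℤ) - 1 + N) i + 1 - (fun _ => -(N:ℤ)) i).toNat = s + 2*N := by
      intro i _
      exact toNatEq2 s N
    rw [Finset.prod_congr rfl hstep, Finset.prod_const, Finset.card_univ, Fintype.card_fin]
  -- linear independence of the t α
  have hli : LinearIndependent K₀ t := by
    rw [linearIndependent_iff']
    intro sfin gc hsum i hi
    have hall := decompUnique V hInt sfin (fun α => gc α • t α)
        (fun α => hsmem _ _ _ (ht α)) hsum i hi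
    by_contra hgi
    have hall' : gc i • t i = 0 := hall
    exact ht0 i (by rw [← inv_smul_smul₀ hgi (t i), hall', smul_zero])
  set Wn : Submodule K₀ R := Submodule.span K₀ (t '' ↑box1) with hWn
  set E : Submodule K₀ R := Submodule.span K₀ (t '' ↑box2) with hE
  haveI hEfd : FiniteDimensional K₀ E :=
    FiniteDimensional.span_of_finite _ (box2.finite_toSet.image t)
  have hfrE : Module.finrank K₀ E ≤ (s + 2*N)^m := by
    have h2 := finrank_span_finset_le_card (R := K₀) (box2.image t)
    have h1 : (↑(box2.image t) : Set R) = t '' ↑box2 := Finset.coe_image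
    rw [h1] at h2
    exact le_trans h2 (le_trans Finset.card_image_le hcard2.le)
  have hfrWn : Module.finrank K₀ Wn = s ^ m := by
    have hli2 : LinearIndependent K₀ (t ∘ (Subtype.val : {x // x ∈ box1} → _)) :=
      hli.comp _ Subtype.val_injective
    have himg : Set.range (t ∘ (Subtype.val : {x // x ∈ box1} → (Fin m → ℤ)))
        = t '' ↑box1 := by
      rw [Set.range_comp]
      congr 1
      ext x
      simp
    have h5 : Set.finrank K₀ (Set.range (t ∘ (Subtype.val : {x // x ∈ box1} → (Fin m → ℤ))))
        = Fintype.card {x // x ∈ box1} := finrank_span_eq_card hli2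
    rw [himg] at h5
    have h6 : Module.finrank K₀ Wn = Fintype.card {x // x ∈ box1} := h5
    rw [h6, Fintype.card_coe, hcard1]
  -- the two image submodules
  have hWE : ∀ (h : R) (S : Finset (Fin m → ℤ)) (e : (Fin m → ℤ) → R), (∀ γ, e γ ∈ V γ) →
      S ⊆ Sf ∪ Sg → h = ∑ γ ∈ S, e γ →
      ∀ (Lh : R →ₗ[K₀] R), (⇑Lh = μ h) → Submodule.map Lh Wn ≤ E := by
    intro h S e heV hSsub hhsum Lh hLh
    rw [hWn, Submodule.map_span]
    apply Submodule.span_le.mpr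
    rintro y ⟨x', hx', rfl⟩
    obtain ⟨β, hβ, rfl⟩ := hx'
    have hβ1 : β ∈ box1 := hβ
    have hexp2 : Lh (t β) = ∑ α ∈ S, μ (e α) (t β) := by
      rw [hLh, hhsum]
      exact hsum1 S e (t β)
    rw [hexp2]
    apply Submodule.sum_mem
    intro α hα
    have hmem := hhom α β (e α) (t β) (heV α) (ht β)
    obtain ⟨k, hk⟩ := hrep (α+β) _ hmem
    rw [hk]
    apply Submodule.smul_mem
    apply Submodule.subset_span
    refine ⟨α + β, ?_, rfl⟩
    have hαb := hbound α (hSsub hα)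
    have hβb : (fun _ => (0:ℤ)) ≤ β ∧ β ≤ (fun _ => (s:ℤ) - 1) := Finset.mem_Icc.mp hβ1
    have : α + β ∈ box2 := by
      rw [hbox2, Finset.mem_Icc]
      constructor <;> intro i
      · exact (addBound (hαb i).1 (hαb i).2 ((hβb.1) i) ((hβb.2) i)).1
      · exact (addBound (hαb i).1 (hαb i).2 ((hβb.1) i) ((hβb.2) i)).2
    exact this
  set Lf : R →ₗ[K₀] R :=
    { toFun := μ f, map_add' := hadd2 f, map_smul' := fun k u => hsmul2 f k u } with hLf
  set Lg : R →ₗ[K₀] R :=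
    { toFun := μ g, map_add' := hadd2 g, map_smul' := fun k u => hsmul2 g k u } with hLg
  have hinjf : Function.Injective Lf := by
    intro a b hab
    by_contra hne
    have hsub : μ f (a - b) = 0 := by
      have h4 : Lf (a - b) = 0 := by rw [map_sub, hab, sub_self]
      exact h4
    exact hμnz f (a-b) hf (sub_ne_zero.mpr (fun hh => hne hh)) hsub
  have hinjg : Function.Injective Lg := by
    intro a b hab
    by_contra hne
    have hsub : μ g (a - b) = 0 := by
      have h4 : Lg (a - b) = 0 := by rw [map_sub, hab, sub_self]
      exact h4
    exact hμnz g (a-b) hg (sub_ne_zero.mpr (fun hh => hne hh)) hsub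
  set W1 := Submodule.map Lf Wn with hW1
  set W2 := Submodule.map Lg Wn with hW2
  have hW1E : W1 ≤ E := hWE f Sf c hc Finset.subset_union_left hfsum Lf rfl
  have hW2E : W2 ≤ E := hWE g Sg d hd Finset.subset_union_right hgsum Lg rfl
  have hfrW1 : Module.finrank K₀ W1 = s^m := by
    rw [← hfrWn]
    exact (LinearEquiv.finrank_eq (Submodule.equivMapOfInjective Lf hinjf Wn)).symm
  have hfrW2 : Module.finrank K₀ W2 = s^m := by
    rw [← hfrWn]
    exact (LinearEquiv.finrank_eq (Submodule.equivMapOfInjective Lg hinjg Wn)).symm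
  haveI : FiniteDimensional K₀ W1 := Submodule.finiteDimensional_of_le hW1E
  haveI : FiniteDimensional K₀ W2 := Submodule.finiteDimensional_of_le hW2E
  have hnotdisj : ¬ Disjoint W1 W2 := by
    intro hdisj
    have hsup : W1 ⊔ W2 ≤ E := sup_le hW1E hW2E
    haveI : FiniteDimensional K₀ (W1 ⊔ W2 : Submodule K₀ R) :=
      Submodule.finiteDimensional_of_le hsup
    have h1 : Module.finrank K₀ (W1 ⊔ W2 : Submodule K₀ R) ≤ Module.finrank K₀ E :=
      Submodule.finrank_mono hsup
    have h2 := Submodule.finrank_sup_add_finrank_inf_eq W1 W2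
    rw [disjoint_iff.mp hdisj] at h2
    rw [finrank_bot, add_zero] at h2
    have h5 : (s + 2*N)^m < 2 * s^m := by rw [hs]; exact natIneq2 hm N
    rw [hfrW1, hfrW2] at h2
    linarith
  rw [Submodule.disjoint_def] at hnotdisj
  push_neg at hnotdisj
  obtain ⟨x, hxW1, hxW2, hx0⟩ := hnotdisj
  obtain ⟨u, hu, hux⟩ := Submodule.mem_map.mp hxW1
  obtain ⟨v, hv, hvx⟩ := Submodule.mem_map.mp hxW2
  refine ⟨u, v, ?_, ?_, ?_⟩
  · intro h0
    rw [h0] at hux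
    apply hx0
    rw [← hux]
    exact hμ02 f
  · intro h0
    rw [h0] at hvx
    apply hx0
    rw [← hvx]
    exact hμ02 g
  · show μ f u = μ g v
    have h6 : Lf u = Lg v := by rw [hux, hvx]
    exact h6

set_option maxHeartbeats 1000000 in
/-- A multivariable skew Laurent polynomial ring satisfies the right and the left
Ore condition with respect to its nonzero elements. -/
theorem skewLaurent_ore (K : Type) [DivisionRing K] (m : ℕ) (hm : 0 < m)
    (R : Type) [Ring R] (L : SkewLaurentRing K m R) :
    (∀ f g : R, f ≠ 0 → g ≠ 0 → ∃ u v : R, u ≠ 0 ∧ v ≠ 0 ∧ f * u = g * v) ∧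
    (∀ f g : R, f ≠ 0 → g ≠ 0 → ∃ u v : R, u ≠ 0 ∧ v ≠ 0 ∧ u * f = v * g) := by
  classical
  obtain ⟨t0, ht0V, ht00, -⟩ := L.oneDim 0
  haveI : Nontrivial R := ⟨⟨t0, 0, ht00⟩⟩
  choose t htV htne hsp using L.oneDim
  have hV0 : ∀ k : K, L.incl k ∈ L.V 0 := fun k => (L.V_zero _).mpr ⟨k, rfl⟩
  have hVmul : ∀ (α β : Fin m → ℤ) (x y : R), x ∈ L.V α → y ∈ L.V β →
      x * y ∈ L.V (α + β) := by
    intro α β x y hx hy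
    rw [← L.mul_V]
    exact Submodule.mul_mem_mul hx hy
  have hincl0 : ∀ k : K, k ≠ 0 → ∀ y : R, L.incl k * y = 0 → y = 0 := by
    intro k hk y h
    have h2 : L.incl k⁻¹ * (L.incl k * y) = y := by
      rw [← mul_assoc, ← map_mul, inv_mul_cancel₀ hk, map_one, one_mul]
    rw [h, mul_zero] at h2; exact h2.symm
  have hincl0' : ∀ (y : R) (k : K), k ≠ 0 → y * L.incl k = 0 → y = 0 := by
    intro y k hk h
    have h2 : (y * L.incl k) * L.incl k⁻¹ = y := by
      rw [mul_assoc, ← map_mul, mul_inv_cancel₀ hk, map_one, mul_one]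
    rw [h, zero_mul] at h2; exact h2.symm
  have hσex : ∀ (α : Fin m → ℤ) (k : K), t α * L.incl k ∈ L.V α := by
    intro α k
    have h := hVmul α 0 _ _ (htV α) (hV0 k)
    rwa [add_zero] at h
  choose σ hσ using fun (α : Fin m → ℤ) (k : K) => hsp α _ (hσex α k)
  -- hσ : ∀ α k, t α * L.incl k = L.incl (σ α k) * t α
  have hσ0 : ∀ (α : Fin m → ℤ) (k : K), k ≠ 0 → σ α k ≠ 0 := by
    intro α k hk h0
    have h1 : t α * L.incl k = 0 := by rw [hσ, h0, map_zero, zero_mul]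
    exact htne α (hincl0' _ k hk h1)
  have hprod : ∀ (α β : Fin m → ℤ) (k l : K),
      (L.incl k * t α) * (L.incl l * t β) = L.incl (k * σ α l) * (t α * t β) := by
    intro α β k l
    have h1 : t α * L.incl l = L.incl (σ α l) * t α := hσ α l
    rw [map_mul]
    calc (L.incl k * t α) * (L.incl l * t β)
        = L.incl k * ((t α * L.incl l) * t β) := by simp only [mul_assoc]
      _ = L.incl k * ((L.incl (σ α l) * t α) * t β) := by rw [h1]
      _ = L.incl k * L.incl (σ α l) * (t α * t β) := by
          simp only [mul_assoc]
  have hVle : ∀ (α β : Fin m → ℤ), ∀ x ∈ L.V (α + β),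
      ∃ k : K, x = L.incl k * (t α * t β) := by
    intro α β
    set P : Submodule ℤ R :=
      { carrier := {x | ∃ k : K, x = L.incl k * (t α * t β)}
        add_mem' := by
          rintro x y ⟨a, rfl⟩ ⟨b, rfl⟩
          exact ⟨a + b, by rw [map_add, add_mul]⟩
        zero_mem' := ⟨0, by rw [map_zero, zero_mul]⟩
        smul_mem' := by
          rintro n x ⟨a, rfl⟩
          exact ⟨n • a, by rw [map_zsmul, smul_mul_assoc]⟩ } with hP
    have hle : L.V α * L.V β ≤ P := by
      rw [Submodule.mul_le]
      intro x hx y hy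
      obtain ⟨k, rfl⟩ := hsp α x hx
      obtain ⟨l, rfl⟩ := hsp β y hy
      exact ⟨k * σ α l, hprod α β k l⟩
    intro x hx
    exact hle (by rw [L.mul_V]; exact hx)
  have hTnz : ∀ α β : Fin m → ℤ, t α * t β ≠ 0 := by
    intro α β h0
    obtain ⟨k, hk⟩ := hVle α β (t (α + β)) (htV (α + β))
    rw [h0, mul_zero] at hk
    exact htne (α + β) hk
  have hnzL : ∀ (α β : Fin m → ℤ) (x y : R), x ∈ L.V α → y ∈ L.V β → x ≠ 0 → y ≠ 0 →
      x * y ≠ 0 := by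
    intro α β x y hx hy hx0 hy0
    obtain ⟨k, rfl⟩ := hsp α x hx
    obtain ⟨l, rfl⟩ := hsp β y hy
    have hk : k ≠ 0 := fun h => hx0 (by rw [h, map_zero, zero_mul])
    have hl : l ≠ 0 := fun h => hy0 (by rw [h, map_zero, zero_mul])
    rw [hprod α β k l]
    intro hcon
    exact hTnz α β (hincl0 _ (mul_ne_zero hk (hσ0 α l hl)) _ hcon)
  have hrepR : ∀ (α : Fin m → ℤ), ∀ x ∈ L.V α, ∃ k : K, x = t α * L.incl k := by
    intro α x hx
    have hmem1 : t α * t (-α) ∈ L.V 0 := by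
      have h := hVmul α (-α) _ _ (htV α) (htV (-α))
      rwa [add_neg_cancel] at h
    obtain ⟨cc, hcc⟩ := (L.V_zero _).mp hmem1
    have hccne : cc ≠ 0 := by
      intro h
      apply hTnz α (-α)
      rw [hcc, h, map_zero]
    have hmem2 : t (-α) * t α ∈ L.V 0 := by
      have h := hVmul (-α) α _ _ (htV (-α)) (htV α)
      rwa [neg_add_cancel] at h
    obtain ⟨dd, hdd⟩ := (L.V_zero _).mp hmem2
    have hkey : ∀ y : K, L.incl (cc * y) * t α = t α * L.incl (σ (-α) y * dd) := by
      intro y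
      calc L.incl (cc * y) * t α = L.incl cc * (L.incl y * t α) := by rw [map_mul, mul_assoc]
        _ = (t α * t (-α)) * (L.incl y * t α) := by rw [← hcc]
        _ = t α * ((t (-α) * L.incl y) * t α) := by
            simp only [mul_assoc]
        _ = t α * ((L.incl (σ (-α) y) * t (-α)) * t α) := by rw [hσ]
        _ = t α * (L.incl (σ (-α) y) * (t (-α) * t α)) := by simp only [mul_assoc]
        _ = t α * (L.incl (σ (-α) y) * L.incl dd) := by rw [← hdd]
        _ = t α * L.incl (σ (-α) y * dd) := by rw [map_mul]
    obtain ⟨k, rfl⟩ := hsp α x hx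
    refine ⟨σ (-α) (cc⁻¹ * k) * dd, ?_⟩
    have h7 : cc * (cc⁻¹ * k) = k := by rw [← mul_assoc, mul_inv_cancel₀ hccne, one_mul]
    rw [← hkey (cc⁻¹ * k), h7]
  letI modL : Module K R := Module.compHom R L.incl
  letI modR : Module Kᵐᵒᵖ R := Module.compHom R (RingHom.op L.incl)
  constructor
  · -- right Ore
    intro f g hf hg
    refine oreAux hm (K₀ := Kᵐᵒᵖ) L.V L.isInternal t htV htne ?_ ?_
      (fun f u => f * u) (fun x y u => add_mul x y u) (fun f u v => mul_add f u v)
      ?_ (fun α β x y hx hy => hVmul α β x y hx hy) hnzL f g hf hg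
    · intro α x hx
      obtain ⟨k, hk⟩ := hrepR α x hx
      refine ⟨MulOpposite.op k, ?_⟩
      show x = t α * L.incl k
      exact hk
    · intro k α x hx
      show x * L.incl k.unop ∈ L.V α
      have h := hVmul α 0 x _ hx (hV0 k.unop)
      rwa [add_zero] at h
    · intro f k u
      show f * (u * L.incl k.unop) = (f * u) * L.incl k.unop
      rw [mul_assoc]
  · -- left Ore
    intro f g hf hg
    refine oreAux hm (K₀ := K) L.V L.isInternal t htV htne ?_ ?_
      (fun f u => u * f) (fun x y u => mul_add u x y) (fun f u v => add_mul u v f)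
      ?_ (fun α β x y hx hy => by rw [add_comm]; exact hVmul β α y x hy hx)
      (fun α β x y hx hy hx0 hy0 => hnzL β α y x hy hx hy0 hx0) f g hf hg
    · intro α x hx
      obtain ⟨k, hk⟩ := hsp α x hx
      refine ⟨k, ?_⟩
      show x = L.incl k * t α
      exact hk
    · intro k α x hx
      show L.incl k * x ∈ L.V α
      have h := hVmul 0 α _ _ (hV0 k) hx
      rwa [zero_add] at h
    · intro f k u
      show (L.incl k * u) * f = L.incl k * (u * f)
      rw [mul_assoc]
end

section
/- Let R be a multivariable skew Laurent polynomial ring of rank m over a division ring K. Let f, g ∈ R be nonzero. Then for every group homomorphism φ : ℤ^m → ℝ one has ‖φ‖_{f·g} = ‖φ‖_f + ‖φ‖_g. -/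
namespace SkewLaurentRing
variable {K : Type} [DivisionRing K] {m : ℕ} {R : Type} [Ring R] (L : SkewLaurentRing K m R)

lemma incl_mul_ne_zero {k : K} (hk : k ≠ 0) {x : R} (hx : x ≠ 0) : L.incl k * x ≠ 0 := by
  intro h
  have h2 : L.incl k⁻¹ * (L.incl k * x) = x := by
    rw [← mul_assoc, ← map_mul, inv_mul_cancel₀ hk, map_one, one_mul]
  rw [h, mul_zero] at h2; exact hx h2.symm

lemma mul_incl_ne_zero {k : K} (hk : k ≠ 0) {x : R} (hx : x ≠ 0) : x * L.incl k ≠ 0 := by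
  intro h
  have h2 : x * L.incl k * L.incl k⁻¹ = x := by
    rw [mul_assoc, ← map_mul, mul_inv_cancel₀ hk, map_one, mul_one]
  rw [h, zero_mul] at h2; exact hx h2.symm

lemma mem_V_mul {α β : Fin m → ℤ} {x y : R} (hx : x ∈ L.V α) (hy : y ∈ L.V β) :
    x * y ∈ L.V (α + β) := by
  rw [← L.mul_V]; exact Submodule.mul_mem_mul hx hy

lemma hom_mul_ne_zero {α β : Fin m → ℤ} {x y : R} (hx : x ∈ L.V α) (hy : y ∈ L.V β)
    (hx0 : x ≠ 0) (hy0 : y ≠ 0) : x * y ≠ 0 := by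
  obtain ⟨t, htV, ht0, htsp⟩ := L.oneDim α
  obtain ⟨s, hsV, hs0, hssp⟩ := L.oneDim β
  obtain ⟨k, hk⟩ := htsp x hx
  obtain ⟨k', hk'⟩ := hssp y hy
  have hk0 : k ≠ 0 := by rintro rfl; simp at hk; exact hx0 hk
  have hk'0 : k' ≠ 0 := by rintro rfl; simp at hk'; exact hy0 hk'
  -- commutation: for any a : K, t * incl a = incl a' * t with a' ≠ 0 if a ≠ 0
  have comm : ∀ a : K, ∃ a' : K, t * L.incl a = L.incl a' * t := by
    intro a
    have hmem : t * L.incl a ∈ L.V α := by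
      have h0 : L.incl a ∈ L.V 0 := (L.V_zero _).2 ⟨a, rfl⟩
      have := L.mem_V_mul htV h0
      rwa [add_zero] at this
    exact htsp _ hmem
  -- t * s ≠ 0
  have hts : t * s ≠ 0 := by
    intro hts0
    obtain ⟨u, huV, hu0, _⟩ := L.oneDim (α + β)
    apply hu0
    have huV' : u ∈ L.V α * L.V β := by rw [L.mul_V]; exact huV
    have : ∃ c : K, u = L.incl c * (t * s) := by
      refine Submodule.mul_induction_on huV' ?_ ?_
      · intro x' hx' y' hy'
        obtain ⟨a, ha⟩ := htsp x' hx'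
        obtain ⟨b, hb⟩ := hssp y' hy'
        obtain ⟨b', hb'⟩ := comm b
        exact ⟨a * b', by rw [ha, hb, map_mul, mul_assoc, ← mul_assoc t, hb',
          mul_assoc, mul_assoc]⟩
      · rintro _ _ ⟨c1, rfl⟩ ⟨c2, rfl⟩
        exact ⟨c1 + c2, by rw [map_add, add_mul]⟩
    obtain ⟨c, hc⟩ := this
    rw [hc, hts0, mul_zero]
  obtain ⟨k'', hk''⟩ := comm k'
  have hk''0 : k'' ≠ 0 := by
    rintro rfl
    have : t * L.incl k' ≠ 0 := L.mul_incl_ne_zero hk'0 ht0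
    rw [hk''] at this; simp at this
  have hxy : x * y = L.incl (k * k'') * (t * s) := by
    rw [hk, hk', map_mul, mul_assoc, ← mul_assoc t, hk'']; simp [mul_assoc]
  rw [hxy]
  exact L.incl_mul_ne_zero (mul_ne_zero hk0 hk''0) hts

end SkewLaurentRing

namespace SkewLaurentRing
open DirectSum
set_option synthInstance.maxHeartbeats 1000000

variable {K : Type} [DivisionRing K] {m : ℕ} {R : Type} [Ring R] (L : SkewLaurentRing K m R)

lemma decomp_zero (c : (Fin m → ℤ) →₀ R) (h : ∀ α, c α ∈ L.V α)
    (hs : (c.sum fun _ x => x) = 0) : ∀ β, c β = 0 := by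
  classical
  set x : ⨁ α, L.V α := ∑ α ∈ c.support, DirectSum.of (fun α => L.V α) α ⟨c α, h α⟩ with hx
  have hco : DirectSum.coeAddMonoidHom L.V x = c.sum fun _ x => x := by
    rw [hx, map_sum, Finsupp.sum]
    exact Finset.sum_congr rfl fun α _ => DirectSum.coeAddMonoidHom_of _ _ _
  have hx0 : x = 0 := L.isInternal.injective (by rw [hco, hs, map_zero])
  intro β
  by_cases hβ : β ∈ c.support
  · have : x β = ⟨c β, h β⟩ := by
      rw [hx, DFinsupp.finset_sum_apply]
      rw [Finset.sum_eq_single_of_mem β hβ]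
      · exact DirectSum.of_eq_same _ _
      · intro α _ hα
        exact DirectSum.of_eq_of_ne _ _ _ hα.symm
    rw [hx0] at this
    exact (Subtype.ext_iff.1 this.symm)
  · exact Finsupp.notMem_support_iff.1 hβ

lemma decomp_unique {f : R} {c d : (Fin m → ℤ) →₀ R} (hc : IsDecomp L f c)
    (hd : IsDecomp L f d) : c = d := by
  have h := L.decomp_zero (c - d) (fun α => by
    rw [Finsupp.sub_apply]; exact sub_mem (hc.1 α) (hd.1 α))
    (by
      rw [Finsupp.sum_sub_index (fun a _ => by simp)]
      rw [← hc.2, ← hd.2, sub_self])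
  ext β
  have := h β
  rw [Finsupp.sub_apply, sub_eq_zero] at this
  exact this

/-- product decomposition -/
noncomputable def mulF (c d : (Fin m → ℤ) →₀ R) : (Fin m → ℤ) →₀ R :=
  c.sum fun α x => d.sum fun β y => Finsupp.single (α + β) (x * y)

lemma mulF_apply (c d : (Fin m → ℤ) →₀ R) (γ : Fin m → ℤ) :
    mulF c d γ = ∑ α ∈ c.support, ∑ β ∈ d.support,
      (if α + β = γ then c α * d β else 0) := by
  classical
  rw [mulF, Finsupp.sum, Finsupp.finset_sum_apply]
  refine Finset.sum_congr rfl fun α _ => ?_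
  rw [Finsupp.sum, Finsupp.finset_sum_apply]
  exact Finset.sum_congr rfl fun β _ => Finsupp.single_apply

lemma mulF_mem (c d : (Fin m → ℤ) →₀ R) (hc : ∀ α, c α ∈ L.V α) (hd : ∀ α, d α ∈ L.V α)
    (γ : Fin m → ℤ) : mulF c d γ ∈ L.V γ := by
  rw [mulF_apply]
  refine Submodule.sum_mem _ fun α _ => Submodule.sum_mem _ fun β _ => ?_
  split
  · next h => exact h ▸ L.mem_V_mul (hc α) (hd β)
  · exact zero_mem _

lemma mulF_sum (c d : (Fin m → ℤ) →₀ R) :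
    ((mulF c d).sum fun _ x => x) = (c.sum fun _ x => x) * (d.sum fun _ x => x) := by
  classical
  unfold mulF
  rw [Finsupp.sum_sum_index (fun _ => rfl) (fun _ _ _ => rfl), Finsupp.sum_mul]
  refine Finsupp.sum_congr fun α _ => ?_
  rw [Finsupp.sum_sum_index (fun _ => rfl) (fun _ _ _ => rfl), Finsupp.mul_sum]
  exact Finsupp.sum_congr fun β _ => Finsupp.sum_single_index rfl

lemma mulF_isDecomp {f g : R} {c d : (Fin m → ℤ) →₀ R} (hc : IsDecomp L f c)
    (hd : IsDecomp L g d) : IsDecomp L (f * g) (mulF c d) :=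
  ⟨L.mulF_mem c d hc.1 hd.1, by rw [mulF_sum, ← hc.2, ← hd.2]⟩

end SkewLaurentRing

noncomputable def psi {m : ℕ} (a : Fin m → ℤ) : Lex (Fin m →₀ ℤ) :=
  toLex (Finsupp.equivFunOnFinite.symm a)

lemma psi_inj {m : ℕ} : Function.Injective (psi (m := m)) :=
  toLex.injective.comp Finsupp.equivFunOnFinite.symm.injective

lemma psi_add {m : ℕ} (a b : Fin m → ℤ) : psi (a + b) = psi a + psi b := by
  unfold psi
  rw [show Finsupp.equivFunOnFinite.symm (a + b)
      = Finsupp.equivFunOnFinite.symm a + Finsupp.equivFunOnFinite.symm b from by ext i; simp]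
  rfl

namespace SkewLaurentRing
variable {K : Type} [DivisionRing K] {m : ℕ} {R : Type} [Ring R] (L : SkewLaurentRing K m R)

lemma key_max (φ : (Fin m → ℤ) →+ ℝ) (c d : (Fin m → ℤ) →₀ R)
    (hc : ∀ α, c α ∈ L.V α) (hd : ∀ α, d α ∈ L.V α)
    (hcne : c.support.Nonempty) (hdne : d.support.Nonempty) :
    ∃ γ ∈ (mulF c d).support,
      φ γ = (c.support.image ⇑φ).max' (hcne.image _)
          + (d.support.image ⇑φ).max' (hdne.image _) ∧
      ∀ γ' ∈ (mulF c d).support, φ γ' ≤ φ γ := by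
  classical
  set Mc := (c.support.image ⇑φ).max' (hcne.image _) with hMcdef
  set Md := (d.support.image ⇑φ).max' (hdne.image _) with hMddef
  have hMc : ∀ α ∈ c.support, φ α ≤ Mc :=
    fun α hα => Finset.le_max' _ _ (Finset.mem_image_of_mem _ hα)
  have hMd : ∀ β ∈ d.support, φ β ≤ Md :=
    fun β hβ => Finset.le_max' _ _ (Finset.mem_image_of_mem _ hβ)
  have hTc : (c.support.filter (fun α => φ α = Mc)).Nonempty := by
    obtain ⟨α0, hα0, hv⟩ := Finset.mem_image.1 (Finset.max'_mem _ (hcne.image ⇑φ))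
    exact ⟨α0, Finset.mem_filter.2 ⟨hα0, hv⟩⟩
  have hTd : (d.support.filter (fun β => φ β = Md)).Nonempty := by
    obtain ⟨β0, hβ0, hv⟩ := Finset.mem_image.1 (Finset.max'_mem _ (hdne.image ⇑φ))
    exact ⟨β0, Finset.mem_filter.2 ⟨hβ0, hv⟩⟩
  obtain ⟨A, hAmem, hAmax⟩ := Finset.exists_max_image _ psi hTc
  obtain ⟨B, hBmem, hBmax⟩ := Finset.exists_max_image _ psi hTd
  obtain ⟨hA1, hA2⟩ := Finset.mem_filter.1 hAmem
  obtain ⟨hB1, hB2⟩ := Finset.mem_filter.1 hBmem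
  have hval : mulF c d (A + B) = c A * d B := by
    rw [mulF_apply]
    rw [Finset.sum_eq_single A]
    · rw [Finset.sum_eq_single B]
      · rw [if_pos rfl]
      · exact fun β _ hne => if_neg fun he => hne (add_left_cancel he)
      · exact fun hB => absurd hB1 hB
    · intro α hα hne
      apply Finset.sum_eq_zero
      intro β hβ
      apply if_neg
      intro he
      have h1 : φ α ≤ Mc := hMc α hα
      have h2 : φ β ≤ Md := hMd β hβ
      have h3 : φ α + φ β = Mc + Md := by rw [← map_add, he, map_add, hA2, hB2]
      have h4 : φ α = Mc := by linarith
      have hψα : psi α ≤ psi A := hAmax α (Finset.mem_filter.2 ⟨hα, h4⟩)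
      have hψβ : psi β ≤ psi B := hBmax β (Finset.mem_filter.2 ⟨hβ, by linarith⟩)
      have h6 : psi α + psi β = psi A + psi B := by rw [← psi_add, he, psi_add]
      have h7 : psi α = psi A := by
        rcases lt_or_eq_of_le hψα with hlt | he'
        · exact absurd h6 (ne_of_lt (add_lt_add_of_lt_of_le hlt hψβ))
        · exact he'
      exact hne (psi_inj h7)
    · exact fun hA => absurd hA1 hA
  have hne0 : c A * d B ≠ 0 :=
    L.hom_mul_ne_zero (hc A) (hd B)
      (Finsupp.mem_support_iff.1 hA1) (Finsupp.mem_support_iff.1 hB1)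
  refine ⟨A + B, Finsupp.mem_support_iff.2 (by rw [hval]; exact hne0), ?_, ?_⟩
  · rw [map_add, hA2, hB2]
  · intro γ' hγ'
    have h := Finsupp.mem_support_iff.1 hγ'
    rw [mulF_apply] at h
    obtain ⟨α, hα, h2⟩ := Finset.exists_ne_zero_of_sum_ne_zero h
    obtain ⟨β, hβ, h3⟩ := Finset.exists_ne_zero_of_sum_ne_zero h2
    have he : α + β = γ' := by
      by_contra hcon; rw [if_neg hcon] at h3; exact h3 rfl
    rw [map_add, hA2, hB2, ← he, map_add]
    exact add_le_add (hMc α hα) (hMd β hβ)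

end SkewLaurentRing

/-- For nonzero `f, g` in a multivariable skew Laurent polynomial ring,
`‖φ‖_{f·g} = ‖φ‖_f + ‖φ‖_g` for every group homomorphism `φ : ℤ^m → ℝ`. -/
theorem polyNorm_mul (K : Type) [DivisionRing K] (m : ℕ) (hm : 0 < m)
    (R : Type) [Ring R] (L : SkewLaurentRing K m R)
    (f g : R) (hf : f ≠ 0) (hg : g ≠ 0)
    (cf cg cfg : (Fin m → ℤ) →₀ R)
    (hcf : IsDecomp L f cf) (hcg : IsDecomp L g cg) (hcfg : IsDecomp L (f * g) cfg)
    (φ : (Fin m → ℤ) →+ ℝ) :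
    suppNorm φ cfg.support = suppNorm φ cf.support + suppNorm φ cg.support := by
  classical
  have hcfne : cf.support.Nonempty := by
    rw [Finsupp.support_nonempty_iff]
    rintro rfl
    exact hf (by rw [hcf.2, Finsupp.sum_zero_index])
  have hcgne : cg.support.Nonempty := by
    rw [Finsupp.support_nonempty_iff]
    rintro rfl
    exact hg (by rw [hcg.2, Finsupp.sum_zero_index])
  have hcfg_eq : cfg = SkewLaurentRing.mulF cf cg :=
    L.decomp_unique hcfg (L.mulF_isDecomp hcf hcg)
  subst hcfg_eq
  -- key: for any ψ, the max of ψ over the product support is the sum of maxes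
  have key : ∀ ψ : (Fin m → ℤ) →+ ℝ,
      WithBot.unbotD 0 ((SkewLaurentRing.mulF cf cg).support.image ⇑ψ).max
        = WithBot.unbotD 0 (cf.support.image ⇑ψ).max + WithBot.unbotD 0 (cg.support.image ⇑ψ).max := by
    intro ψ
    obtain ⟨γ, hγmem, hγval, hγmax⟩ := L.key_max ψ cf cg hcf.1 hcg.1 hcfne hcgne
    have hne : (SkewLaurentRing.mulF cf cg).support.Nonempty := ⟨γ, hγmem⟩
    rw [← Finset.coe_max' (hne.image ⇑ψ), ← Finset.coe_max' (hcfne.image ⇑ψ),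
      ← Finset.coe_max' (hcgne.image ⇑ψ), WithBot.unbotD_coe, WithBot.unbotD_coe,
      WithBot.unbotD_coe]
    refine le_antisymm (Finset.max'_le _ _ _ fun x hx => ?_) ?_
    · obtain ⟨γ', hγ', rfl⟩ := Finset.mem_image.1 hx
      exact (hγmax γ' hγ').trans (le_of_eq hγval)
    · rw [← hγval]
      exact Finset.le_max' _ _ (Finset.mem_image_of_mem _ hγmem)
  have hfgne : (SkewLaurentRing.mulF cf cg).support.Nonempty := by
    obtain ⟨γ, hγmem, _, _⟩ := L.key_max φ cf cg hcf.1 hcg.1 hcfne hcgne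
    exact ⟨γ, hγmem⟩
  -- min via -φ
  have minmax : ∀ S : Finset (Fin m → ℤ), S.Nonempty →
      WithTop.untopD 0 (S.image ⇑φ).min = -(WithBot.unbotD 0 (S.image ⇑(-φ)).max) := by
    intro S hS
    rw [← Finset.coe_min' (hS.image ⇑φ), ← Finset.coe_max' (hS.image ⇑(-φ)),
      WithTop.untopD_coe, WithBot.unbotD_coe]
    refine le_antisymm ?_ ?_
    · obtain ⟨a0, ha0, hv⟩ := Finset.mem_image.1 (Finset.max'_mem _ (hS.image ⇑(-φ)))
      have h1 : (S.image ⇑φ).min' (hS.image ⇑φ) ≤ φ a0 :=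
        Finset.min'_le _ _ (Finset.mem_image_of_mem _ ha0)
      rw [← hv]
      simpa using h1
    · refine Finset.le_min' _ _ _ fun x hx => ?_
      obtain ⟨a, ha, rfl⟩ := Finset.mem_image.1 hx
      have h1 : (-φ) a ≤ (S.image ⇑(-φ)).max' (hS.image ⇑(-φ)) :=
        Finset.le_max' _ _ (Finset.mem_image_of_mem _ ha)
      have h2 : -(φ a) ≤ (S.image ⇑(-φ)).max' (hS.image ⇑(-φ)) := by simpa using h1
      linarith
  unfold suppNorm
  rw [minmax _ hfgne, minmax _ hcfne, minmax _ hcgne, key φ, key (-φ)]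
  ring
end

section
/- Let F be a commutative field, m a positive integer, and let f, g be nonzero elements of the Laurent polynomial ring F[t_1^{±1},…,t_m^{±1}]. Then the Newton polytope of f·g is the Minkowski sum of the Newton polytopes of f and of g: convexHull(supp(f·g)) = convexHull(supp(f)) + convexHull(supp(g)) as subsets of ℝ^m, where each support is regarded as a finite subset of ℝ^m via the inclusion ℤ^m ⊆ ℝ^m. -/
open scoped Pointwise

/-- The inclusion of the integer lattice `ℤ^m` into `ℝ^m`. -/
def latticeEmbed {m : ℕ} (α : Fin m → ℤ) : Fin m → ℝ := fun i => (α i : ℝ)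

lemma latticeEmbed_add {m : ℕ} (a b : Fin m → ℤ) :
    latticeEmbed (a + b) = latticeEmbed a + latticeEmbed b := by
  funext i; simp [latticeEmbed]

/-- `latticeEmbed` as an additive monoid hom. -/
def latticeEmbedHom (m : ℕ) : (Fin m → ℤ) →+ (Fin m → ℝ) where
  toFun := latticeEmbed
  map_zero' := by funext i; simp [latticeEmbed]
  map_add' := latticeEmbed_add

/-- Key lemma: the top `w`-graded piece of a product is nonzero. -/
lemma exists_max_support_mul {F : Type} [Field F] {m : ℕ}
    (f g : AddMonoidAlgebra F (Fin m → ℤ)) (hf : f ≠ 0) (hg : g ≠ 0)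
    (w : (Fin m → ℤ) → ℝ) (hw : ∀ a b, w (a + b) = w a + w b)
    {Mf Mg : ℝ} (hMf : ∀ a ∈ f.coeff.support, w a ≤ Mf) (hMg : ∀ b ∈ g.coeff.support, w b ≤ Mg)
    (haf : ∃ a ∈ f.coeff.support, w a = Mf) (hbg : ∃ b ∈ g.coeff.support, w b = Mg) :
    ∃ γ ∈ (f * g).coeff.support, w γ = Mf + Mg := by
  classical
  set ft : AddMonoidAlgebra F (Fin m → ℤ) := AddMonoidAlgebra.ofCoeff (Finsupp.filter (fun a => w a = Mf) f.coeff) with hft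
  set f' : AddMonoidAlgebra F (Fin m → ℤ) := AddMonoidAlgebra.ofCoeff (Finsupp.filter (fun a => ¬ w a = Mf) f.coeff) with hf'
  set gt : AddMonoidAlgebra F (Fin m → ℤ) := AddMonoidAlgebra.ofCoeff (Finsupp.filter (fun b => w b = Mg) g.coeff) with hgt
  set g' : AddMonoidAlgebra F (Fin m → ℤ) := AddMonoidAlgebra.ofCoeff (Finsupp.filter (fun b => ¬ w b = Mg) g.coeff) with hg'
  have hfsplit : ft + f' = f := AddMonoidAlgebra.ext (Finsupp.filter_pos_add_filter_neg f.coeff _)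
  have hgsplit : gt + g' = g := AddMonoidAlgebra.ext (Finsupp.filter_pos_add_filter_neg g.coeff _)
  have hftsupp : ft.coeff.support = f.coeff.support.filter (fun a => w a = Mf) :=
    Finsupp.support_filter _ _
  have hf'supp : f'.coeff.support = f.coeff.support.filter (fun a => ¬ w a = Mf) :=
    Finsupp.support_filter _ _
  have hgtsupp : gt.coeff.support = g.coeff.support.filter (fun b => w b = Mg) :=
    Finsupp.support_filter _ _
  have hg'supp : g'.coeff.support = g.coeff.support.filter (fun b => ¬ w b = Mg) :=
    Finsupp.support_filter _ _
  -- ft ≠ 0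
  obtain ⟨a0, ha0, ha0M⟩ := haf
  obtain ⟨b0, hb0, hb0M⟩ := hbg
  have hftne : ft ≠ 0 := by
    intro h
    have : a0 ∈ ft.coeff.support := by
      rw [hftsupp, Finset.mem_filter]; exact ⟨ha0, ha0M⟩
    rw [h] at this; simp at this
  have hgtne : gt ≠ 0 := by
    intro h
    have : b0 ∈ gt.coeff.support := by
      rw [hgtsupp, Finset.mem_filter]; exact ⟨hb0, hb0M⟩
    rw [h] at this; simp at this
  have hprod : ft * gt ≠ 0 := mul_ne_zero hftne hgtne
  obtain ⟨γ, hγ⟩ := Finsupp.support_nonempty_iff.mpr (AddMonoidAlgebra.coeff_eq_zero.not.mpr hprod)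
  -- γ decomposes as a sum of maximizers
  have hγmem : γ ∈ ft.coeff.support + gt.coeff.support := AddMonoidAlgebra.support_coeff_mul_subset ft gt hγ
  obtain ⟨a, ha, b, hb, hab⟩ := Finset.mem_add.mp hγmem
  rw [hftsupp] at ha
  rw [hgtsupp] at hb
  have haM : w a = Mf := (Finset.mem_filter.mp ha).2
  have hbM : w b = Mg := (Finset.mem_filter.mp hb).2
  have hγw : w γ = Mf + Mg := by rw [← hab, hw, haM, hbM]
  refine ⟨γ, ?_, hγw⟩
  -- coefficient of f*g at γ equals that of ft*gt
  have hnot : ∀ (x y : AddMonoidAlgebra F (Fin m → ℤ)),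
      (∀ a ∈ x.coeff.support, ∀ b ∈ y.coeff.support, w a + w b < Mf + Mg) → (x * y).coeff γ = 0 := by
    intro x y hlt
    by_contra h
    have hγ' : γ ∈ (x * y).coeff.support := Finsupp.mem_support_iff.mpr h
    obtain ⟨a', ha', b', hb', hab'⟩ := Finset.mem_add.mp (AddMonoidAlgebra.support_coeff_mul_subset x y hγ')
    have := hlt a' ha' b' hb'
    rw [← hw, hab', hγw] at this
    exact lt_irrefl _ this
  have h1 : (ft * g').coeff γ = 0 := by
    apply hnot
    intro a ha b hb
    rw [hftsupp] at ha
    rw [hg'supp] at hb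
    have haM' : w a = Mf := (Finset.mem_filter.mp ha).2
    have hb' := Finset.mem_filter.mp hb
    have : w b < Mg := lt_of_le_of_ne (hMg b hb'.1) hb'.2
    linarith
  have h2 : (f' * gt).coeff γ = 0 := by
    apply hnot
    intro a ha b hb
    rw [hf'supp] at ha
    rw [hgtsupp] at hb
    have ha' := Finset.mem_filter.mp ha
    have : w a < Mf := lt_of_le_of_ne (hMf a ha'.1) ha'.2
    have hbM' : w b = Mg := (Finset.mem_filter.mp hb).2
    linarith
  have h3 : (f' * g').coeff γ = 0 := by
    apply hnot
    intro a ha b hb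
    rw [hf'supp] at ha
    rw [hg'supp] at hb
    have ha' := Finset.mem_filter.mp ha
    have hb' := Finset.mem_filter.mp hb
    have h1 : w a < Mf := lt_of_le_of_ne (hMf a ha'.1) ha'.2
    have h2 : w b < Mg := lt_of_le_of_ne (hMg b hb'.1) hb'.2
    linarith
  have hexp : f * g = ft * gt + (ft * g' + (f' * gt + f' * g')) := by
    rw [← hfsplit, ← hgsplit]; ring
  have : (f * g).coeff γ = (ft * gt).coeff γ := by
    rw [hexp, AddMonoidAlgebra.coeff_add, Finsupp.add_apply, AddMonoidAlgebra.coeff_add, Finsupp.add_apply, AddMonoidAlgebra.coeff_add, Finsupp.add_apply, h1, h2, h3]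
    ring
  rw [Finsupp.mem_support_iff, this]
  exact Finsupp.mem_support_iff.mp hγ

/-- The Newton polytope of a product of nonzero multivariable Laurent polynomials
over a commutative field is the Minkowski sum of the Newton polytopes of the factors. -/
theorem newton_polytope_mul (F : Type) [Field F] (m : ℕ) (hm : 0 < m)
    (f g : AddMonoidAlgebra F (Fin m → ℤ)) (hf : f ≠ 0) (hg : g ≠ 0) :
    convexHull ℝ (latticeEmbed '' ((f * g).coeff.support : Set (Fin m → ℤ))) =
      convexHull ℝ (latticeEmbed '' (f.coeff.support : Set (Fin m → ℤ))) +
        convexHull ℝ (latticeEmbed '' (g.coeff.support : Set (Fin m → ℤ))) := by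
  classical
  apply Set.Subset.antisymm
  · -- easy inclusion
    have h1 : ((f * g).coeff.support : Set (Fin m → ℤ)) ⊆
        (f.coeff.support : Set (Fin m → ℤ)) + (g.coeff.support : Set (Fin m → ℤ)) := by
      intro x hx
      have := AddMonoidAlgebra.support_coeff_mul_subset f g hx
      rw [← Finset.coe_add]
      exact_mod_cast this
    calc convexHull ℝ (latticeEmbed '' ((f * g).coeff.support : Set (Fin m → ℤ)))
        ⊆ convexHull ℝ (latticeEmbed ''
            ((f.coeff.support : Set (Fin m → ℤ)) + (g.coeff.support : Set (Fin m → ℤ)))) :=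
          convexHull_mono (Set.image_mono h1)
      _ = convexHull ℝ (latticeEmbed '' (f.coeff.support : Set (Fin m → ℤ)) +
            latticeEmbed '' (g.coeff.support : Set (Fin m → ℤ))) := by
          rw [show (latticeEmbed : (Fin m → ℤ) → (Fin m → ℝ)) = ⇑(latticeEmbedHom m) from rfl,
            Set.image_add]
      _ = _ := convexHull_add _ _
  · -- hard inclusion
    intro x hx
    by_contra hx'
    -- the Newton polytope of f*g is closed and convex
    have hfin : (latticeEmbed '' ((f * g).coeff.support : Set (Fin m → ℤ))).Finite :=
      ((f * g).coeff.support.finite_toSet).image _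
    have hclosed : IsClosed (convexHull ℝ (latticeEmbed '' ((f * g).coeff.support : Set (Fin m → ℤ)))) :=
      (hfin.isCompact_convexHull (𝕜 := ℝ)).isClosed
    obtain ⟨ℓ, u, hsep, hux⟩ :=
      geometric_hahn_banach_closed_point (convex_convexHull ℝ _) hclosed hx'
    obtain ⟨p, hp, q, hq, hpq⟩ := Set.mem_add.mp hx
    set w : (Fin m → ℤ) → ℝ := fun α => ℓ (latticeEmbed α) with hwdef
    have hw : ∀ a b, w (a + b) = w a + w b := by
      intro a b; simp [hwdef, latticeEmbed_add, map_add]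
    obtain ⟨a0, ha0, hamax⟩ := f.coeff.support.exists_max_image w (Finsupp.support_nonempty_iff.mpr (AddMonoidAlgebra.coeff_eq_zero.not.mpr hf))
    obtain ⟨b0, hb0, hbmax⟩ := g.coeff.support.exists_max_image w (Finsupp.support_nonempty_iff.mpr (AddMonoidAlgebra.coeff_eq_zero.not.mpr hg))
    set Mf := w a0
    set Mg := w b0
    -- bound ℓ on both polytopes
    have hhalf : ∀ (s : Finset (Fin m → ℤ)) (M : ℝ), (∀ a ∈ s, w a ≤ M) →
        ∀ y ∈ convexHull ℝ (latticeEmbed '' (s : Set (Fin m → ℤ))), ℓ y ≤ M := by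
      intro s M hM y hy
      have : convexHull ℝ (latticeEmbed '' (s : Set (Fin m → ℤ))) ⊆ {z | ℓ z ≤ M} := by
        apply convexHull_min
        · rintro z ⟨α, hα, rfl⟩
          exact hM α hα
        · exact convex_halfSpace_le ℓ.toLinearMap.isLinear M
      exact this hy
    have hℓp : ℓ p ≤ Mf := hhalf f.coeff.support Mf hamax p hp
    have hℓq : ℓ q ≤ Mg := hhalf g.coeff.support Mg hbmax q hq
    obtain ⟨γ, hγ, hγw⟩ := exists_max_support_mul f g hf hg w hw hamax hbmax
      ⟨a0, ha0, rfl⟩ ⟨b0, hb0, rfl⟩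
    have hγin : latticeEmbed γ ∈ convexHull ℝ (latticeEmbed '' ((f * g).coeff.support : Set (Fin m → ℤ))) :=
      subset_convexHull ℝ _ ⟨γ, hγ, rfl⟩
    have h1 := hsep _ hγin
    have h2 : ℓ x = ℓ p + ℓ q := by rw [← hpq, map_add]
    have : w γ = Mf + Mg := hγw
    rw [hwdef] at this
    simp only at this
    linarith [hux, h1, hℓp, hℓq]
end
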